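/- Let C₁, C₂ be two distinct cycles with the same Slitherlink signature in T_n. Then for each of the three sides of T_n (bottom, left, right), at least one of C₁, C₂ contains an edge on that side; in particular, if neither C₁ nor C₂ contains any edge of the bottom side, then C₁ = C₂. -/

import Mathlib

/-! Triangular grid `Tₙ` -/

abbrev Pt : Type := ℕ × ℕ
abbrev TEdge : Type := Sym2 Pt

/-- `(x,y)` is a vertex of the triangular grid `Tₙ`. -/
def IsVertex (n : ℕ) (p : Pt) : Prop :=
  1 ≤ p.2 ∧ p.2 ≤ n + 1 ∧ 1 ≤ p.1 ∧ p.1 + p.2 ≤ n + 2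

/-- `e` is an edge of the triangular grid `Tₙ`. -/
def IsEdge (n : ℕ) (e : TEdge) : Prop :=
  ∃ x y : ℕ, IsVertex n (x, y) ∧
    ((e = s((x, y), (x + 1, y)) ∧ IsVertex n (x + 1, y)) ∨
     (e = s((x, y), (x, y + 1)) ∧ IsVertex n (x, y + 1)) ∨
     (e = s((x + 1, y), (x, y + 1)) ∧ IsVertex n (x + 1, y) ∧ IsVertex n (x, y + 1)))

/-- The three edges of the upward unit triangle with bottom-left corner `(x,y)`. -/
def upFace (x y : ℕ) : Set TEdge :=
  {s((x, y), (x + 1, y)), s((x, y), (x, y + 1)), s((x + 1, y), (x, y + 1))}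

/-- The three edges of the downward unit triangle. -/
def downFace (x y : ℕ) : Set TEdge :=
  {s((x + 1, y), (x, y + 1)), s((x + 1, y), (x + 1, y + 1)), s((x, y + 1), (x + 1, y + 1))}

/-- The upward triangle at `(x,y)` is a face of `Tₙ`. -/
def IsUpFace (n x y : ℕ) : Prop :=
  IsVertex n (x, y) ∧ IsVertex n (x + 1, y) ∧ IsVertex n (x, y + 1)

/-- The downward triangle at `(x,y)` is a face of `Tₙ`. -/
def IsDownFace (n x y : ℕ) : Prop :=
  IsVertex n (x + 1, y) ∧ IsVertex n (x, y + 1) ∧ IsVertex n (x + 1, y + 1)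

/-- A totally even subset of the edges of `Tₙ`: every vertex is incident to an even
number of its edges, and every unit triangular face contains an even number of its edges. -/
def TotallyEven (n : ℕ) (A : Set TEdge) : Prop :=
  (∀ e ∈ A, IsEdge n e) ∧
  (∀ p : Pt, IsVertex n p → Even (Set.ncard {e ∈ A | p ∈ e})) ∧
  (∀ x y : ℕ, IsUpFace n x y → Even (Set.ncard (A ∩ upFace x y))) ∧
  (∀ x y : ℕ, IsDownFace n x y → Even (Set.ncard (A ∩ downFace x y)))

/-- `C` is the edge set of a cycle in `Tₙ`. -/
def IsCycle (n : ℕ) (C : Set TEdge) : Prop :=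
  ∃ (m : ℕ) (f : ZMod m → Pt), 3 ≤ m ∧ Function.Injective f ∧
    (∀ i : ZMod m, IsEdge n s(f i, f (i + 1))) ∧
    C = {e : TEdge | ∃ i : ZMod m, e = s(f i, f (i + 1))}

/-- Two edge sets of `Tₙ` have the same Slitherlink signature: each unit triangular face
contains equally many edges of both. -/
def SameSignature (n : ℕ) (C₁ C₂ : Set TEdge) : Prop :=
  (∀ x y : ℕ, IsUpFace n x y →
    Set.ncard (C₁ ∩ upFace x y) = Set.ncard (C₂ ∩ upFace x y)) ∧
  (∀ x y : ℕ, IsDownFace n x y →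
    Set.ncard (C₁ ∩ downFace x y) = Set.ncard (C₂ ∩ downFace x y))

/-- `A` is the totally even subset `A(i)` of `Tₙ`: it is totally even and its intersection
with the bottom side is exactly the single edge `{(i,1),(i+1,1)}`. -/
def IsBasisSubset (n i : ℕ) (A : Set TEdge) : Prop :=
  TotallyEven n A ∧
  ∀ i' : ℕ, 1 ≤ i' → i' ≤ n → (s(((i' : ℕ), 1), (i' + 1, 1)) ∈ A ↔ i' = i)

open scoped symmDiff
/-! ### Auxiliary machinery -/

def hE (x y : ℕ) : TEdge := s((x, y), (x + 1, y))
def vE (x y : ℕ) : TEdge := s((x, y), (x, y + 1))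
def dE (x y : ℕ) : TEdge := s((x + 1, y), (x, y + 1))

lemma isVertex_iff {n x y : ℕ} :
    IsVertex n (x, y) ↔ 1 ≤ y ∧ y ≤ n + 1 ∧ 1 ≤ x ∧ x + y ≤ n + 2 := Iff.rfl

lemma isEdge_hE {n x y : ℕ} :
    IsEdge n (hE x y) ↔ IsVertex n (x, y) ∧ IsVertex n (x + 1, y) := by
  constructor
  · rintro ⟨a, b, hv, (⟨he, hv2⟩ | ⟨he, hv2⟩ | ⟨he, hv2, hv3⟩)⟩ <;>
      simp only [hE, Sym2.eq_iff, Prod.mk.injEq] at he <;>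
      simp only [isVertex_iff] at * <;> omega
  · rintro ⟨h1, h2⟩; exact ⟨x, y, h1, Or.inl ⟨rfl, h2⟩⟩

lemma isEdge_vE {n x y : ℕ} :
    IsEdge n (vE x y) ↔ IsVertex n (x, y) ∧ IsVertex n (x, y + 1) := by
  constructor
  · rintro ⟨a, b, hv, (⟨he, hv2⟩ | ⟨he, hv2⟩ | ⟨he, hv2, hv3⟩)⟩ <;>
      simp only [vE, Sym2.eq_iff, Prod.mk.injEq] at he <;>
      simp only [isVertex_iff] at * <;> omega
  · rintro ⟨h1, h2⟩; exact ⟨x, y, h1, Or.inr (Or.inl ⟨rfl, h2⟩)⟩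

lemma isEdge_dE {n x y : ℕ} :
    IsEdge n (dE x y) ↔ IsVertex n (x + 1, y) ∧ IsVertex n (x, y + 1) := by
  constructor
  · rintro ⟨a, b, hv, (⟨he, hv2⟩ | ⟨he, hv2⟩ | ⟨he, hv2, hv3⟩)⟩ <;>
      simp only [dE, Sym2.eq_iff, Prod.mk.injEq] at he <;>
      simp only [isVertex_iff] at * <;> omega
  · rintro ⟨h1, h2⟩
    refine ⟨x, y, ?_, Or.inr (Or.inr ⟨rfl, h1, h2⟩)⟩
    simp only [isVertex_iff] at *; omega

lemma edge_form {n : ℕ} {e : TEdge} (h : IsEdge n e) :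
    ∃ x y, (e = hE x y ∧ IsVertex n (x, y) ∧ IsVertex n (x + 1, y)) ∨
      (e = vE x y ∧ IsVertex n (x, y) ∧ IsVertex n (x, y + 1)) ∨
      (e = dE x y ∧ IsVertex n (x + 1, y) ∧ IsVertex n (x, y + 1)) := by
  obtain ⟨x, y, hv, (⟨he, hv2⟩ | ⟨he, hv2⟩ | ⟨he, hv2, hv3⟩)⟩ := h
  · exact ⟨x, y, Or.inl ⟨he, hv, hv2⟩⟩
  · exact ⟨x, y, Or.inr (Or.inl ⟨he, hv, hv2⟩)⟩
  · exact ⟨x, y, Or.inr (Or.inr ⟨he, hv2, hv3⟩)⟩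

lemma mem_edge_decode {n : ℕ} {e : TEdge} {p : Pt} (h : IsEdge n e) (hp : p ∈ e) :
    ∃ x y, (e = hE x y ∧ (p = (x, y) ∨ p = (x + 1, y))) ∨
      (e = vE x y ∧ (p = (x, y) ∨ p = (x, y + 1))) ∨
      (e = dE x y ∧ (p = (x + 1, y) ∨ p = (x, y + 1))) := by
  obtain ⟨x, y, hc⟩ := edge_form h
  refine ⟨x, y, ?_⟩
  rcases hc with ⟨rfl, -⟩ | ⟨rfl, -⟩ | ⟨rfl, -⟩
  · exact Or.inl ⟨rfl, by simpa [hE, Sym2.mem_iff] using hp⟩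
  · exact Or.inr (Or.inl ⟨rfl, by simpa [vE, Sym2.mem_iff] using hp⟩)
  · exact Or.inr (Or.inr ⟨rfl, by simpa [dE, Sym2.mem_iff] using hp⟩)

lemma eq_empty_of_even_subset_singleton {s : Set TEdge} {a : TEdge}
    (hsub : s ⊆ {a}) (he : Even s.ncard) : s = ∅ := by
  rcases Set.subset_singleton_iff_eq.mp hsub with h | h
  · exact h
  · rw [h, Set.ncard_singleton, Nat.even_iff] at he; omega

lemma upFace_eq (x y : ℕ) : upFace x y = {hE x y, vE x y, dE x y} := rfl

lemma downFace_eq (x y : ℕ) : downFace x y = {dE x y, vE (x + 1) y, hE x (y + 1)} := rfl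

lemma ncard_symmDiff_parity {s t : Set TEdge} (hs : s.Finite) (ht : t.Finite) :
    (s ∆ t).ncard + 2 * (s ∩ t).ncard = s.ncard + t.ncard := by
  have h1 : s ∆ t = (s \ t) ∪ (t \ s) := symmDiff_def s t
  have hd : Disjoint (s \ t) (t \ s) := by
    rw [Set.disjoint_iff_inter_eq_empty]
    ext e; simp only [Set.mem_inter_iff, Set.mem_diff, Set.mem_empty_iff_false, iff_false]
    tauto
  have h2 : (s ∆ t).ncard = (s \ t).ncard + (t \ s).ncard := by
    rw [h1, Set.ncard_union_eq hd hs.diff ht.diff]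
  have h3 : (s \ (s ∩ t)).ncard + (s ∩ t).ncard = s.ncard :=
    Set.ncard_diff_add_ncard_of_subset Set.inter_subset_left hs
  have h4 : (t \ (t ∩ s)).ncard + (t ∩ s).ncard = t.ncard :=
    Set.ncard_diff_add_ncard_of_subset Set.inter_subset_left ht
  rw [Set.diff_self_inter] at h3 h4
  have h5 : (t ∩ s).ncard = (s ∩ t).ncard := by rw [Set.inter_comm]
  omega

lemma even_ncard_symmDiff_of_even {s t : Set TEdge} (hs : s.Finite) (ht : t.Finite)
    (h1 : Even s.ncard) (h2 : Even t.ncard) : Even ((s ∆ t).ncard) := by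
  have := ncard_symmDiff_parity hs ht
  rw [Nat.even_iff] at *; omega

lemma even_ncard_symmDiff_of_eq {s t : Set TEdge} (hs : s.Finite) (ht : t.Finite)
    (h : s.ncard = t.ncard) : Even ((s ∆ t).ncard) := by
  have := ncard_symmDiff_parity hs ht
  rw [Nat.even_iff]; omega
lemma cycle_edges {n : ℕ} {C : Set TEdge} (h : IsCycle n C) : ∀ e ∈ C, IsEdge n e := by
  obtain ⟨m, f, hm, hinj, hedge, rfl⟩ := h
  rintro e ⟨i, rfl⟩
  exact hedge i

lemma cycle_vertex {n : ℕ} {C : Set TEdge} (h : IsCycle n C) (p : Pt) :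
    ({e ∈ C | p ∈ e}).Finite ∧ Even ({e ∈ C | p ∈ e}).ncard := by
  obtain ⟨m, f, hm, hinj, hedge, rfl⟩ := h
  have hm0 : (m : ℕ) ≠ 0 := by omega
  by_cases hp : ∃ i, f i = p
  · obtain ⟨i, rfl⟩ := hp
    have hset : {e ∈ {e : TEdge | ∃ j : ZMod m, e = s(f j, f (j + 1))} | f i ∈ e} =
        {s(f (i - 1), f i), s(f i, f (i + 1))} := by
      ext e
      simp only [Set.mem_setOf_eq, Set.mem_insert_iff, Set.mem_singleton_iff]
      constructor
      · rintro ⟨⟨j, rfl⟩, hmem⟩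
        rcases Sym2.mem_iff.mp hmem with h' | h'
        · right; rw [hinj h'.symm]
        · left
          have hj : j = i - 1 := eq_sub_of_add_eq (hinj h'.symm)
          rw [hj, sub_add_cancel]
      · rintro (rfl | rfl)
        · exact ⟨⟨i - 1, by rw [sub_add_cancel]⟩, by simp⟩
        · exact ⟨⟨i, rfl⟩, by simp⟩
    rw [hset]
    have hne : s(f (i - 1), f i) ≠ s(f i, f (i + 1)) := by
      intro hcon
      rw [Sym2.eq_iff] at hcon
      rcases hcon with ⟨h1, h2⟩ | ⟨h1, h2⟩
      · have h3 : i - 1 = i := hinj h1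
        have h4 : (1 : ZMod m) = 0 := by
          have := sub_eq_self.mp h3; exact this
        have h5 : ((1 : ℕ) : ZMod m) = 0 := by exact_mod_cast h4
        have := Nat.dvd_one.mp ((ZMod.natCast_eq_zero_iff 1 m).mp h5)
        omega
      · have h3 : i - 1 = i + 1 := hinj h1
        have h4 : ((2 : ℕ) : ZMod m) = 0 := by
          have : (i + 1) - (i - 1) = 0 := by rw [← h3, sub_self]
          push_cast
          linear_combination this
        have := Nat.le_of_dvd (by norm_num) ((ZMod.natCast_eq_zero_iff 2 m).mp h4)
        omega
    constructor
    · exact (Set.finite_singleton _).insert _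
    · rw [Set.ncard_pair hne]; exact even_two
  · have hset : {e ∈ {e : TEdge | ∃ j : ZMod m, e = s(f j, f (j + 1))} | p ∈ e} = ∅ := by
      ext e
      simp only [Set.mem_setOf_eq, Set.mem_empty_iff_false, iff_false, not_and]
      rintro ⟨j, rfl⟩ hmem
      rcases Sym2.mem_iff.mp hmem with h' | h'
      · exact hp ⟨j, h'.symm⟩
      · exact hp ⟨j + 1, h'.symm⟩
    rw [hset]
    exact ⟨Set.finite_empty, by simp⟩
lemma totallyEven_no_bottom {n : ℕ} {A : Set TEdge} (hA : TotallyEven n A)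
    (hb : ∀ i, 1 ≤ i → i ≤ n → hE i 1 ∉ A) : A = ∅ := by
  obtain ⟨hedge, hvert, hup, hdown⟩ := hA
  -- non-edges are not in A
  have hne : ∀ e, ¬ IsEdge n e → e ∉ A := fun e h hm => h (hedge e hm)
  have key : ∀ y, 1 ≤ y → (∀ x, hE x y ∉ A) ∧
      (∀ y' x, y' < y → vE x y' ∉ A ∧ dE x y' ∉ A) := by
    intro y hy
    induction y, hy using Nat.le_induction with
    | base =>
      refine ⟨?_, ?_⟩
      · intro x
        by_cases hx : 1 ≤ x ∧ x ≤ n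
        · exact hb x hx.1 hx.2
        · refine hne _ fun h => ?_
          rw [isEdge_hE] at h
          simp only [isVertex_iff] at h; omega
      · intro y' x hy'
        have hy0 : y' = 0 := by omega
        subst hy0
        constructor
        · refine hne _ fun h => ?_
          rw [isEdge_vE] at h
          simp only [isVertex_iff] at h; omega
        · refine hne _ fun h => ?_
          rw [isEdge_dE] at h
          simp only [isVertex_iff] at h; omega
    | succ y hy ih =>
      obtain ⟨ihH, ihL⟩ := ih
      -- step 1: all verticals and diagonals at level y are absent
      have row : ∀ x, vE x y ∉ A ∧ dE x y ∉ A := by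
        intro x
        induction x with
        | zero =>
          constructor
          · refine hne _ fun h => ?_
            rw [isEdge_vE] at h
            simp only [isVertex_iff] at h; omega
          · refine hne _ fun h => ?_
            rw [isEdge_dE] at h
            simp only [isVertex_iff] at h; omega
        | succ x ihx =>
          have hv : vE (x + 1) y ∉ A := by
            by_cases hvx : IsVertex n (x + 1, y)
            · have heven := hvert (x + 1, y) hvx
              have hsub : {e ∈ A | ((x + 1 : ℕ), y) ∈ e} ⊆ {vE (x + 1) y} := by
                rintro e ⟨heA, hpe⟩
                obtain ⟨a, b, hcase⟩ := mem_edge_decode (hedge e heA) hpe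
                rcases hcase with ⟨rfl, hp | hp⟩ | ⟨rfl, hp | hp⟩ | ⟨rfl, hp | hp⟩ <;>
                  simp only [Prod.mk.injEq] at hp
                · obtain ⟨h1, h2⟩ := hp
                  subst h2; exact absurd heA (ihH a)
                · obtain ⟨h1, h2⟩ := hp
                  subst h2; exact absurd heA (ihH a)
                · obtain ⟨h1, h2⟩ := hp
                  subst h1; subst h2; rfl
                · exact absurd heA ((ihL b a (by omega)).1)
                · obtain ⟨h1, h2⟩ := hp
                  subst h2
                  have ha : a = x := by omega
                  subst ha
                  exact absurd heA ihx.2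
                · exact absurd heA ((ihL b a (by omega)).2)
              have hempty := eq_empty_of_even_subset_singleton hsub heven
              intro hmem
              have : vE (x + 1) y ∈ {e ∈ A | ((x + 1 : ℕ), y) ∈ e} :=
                ⟨hmem, by simp [vE]⟩
              rw [hempty] at this
              exact this
            · refine hne _ fun h => ?_
              rw [isEdge_vE] at h
              exact hvx h.1
          have hd : dE (x + 1) y ∉ A := by
            by_cases hface : IsUpFace n (x + 1) y
            · have heven := hup (x + 1) y hface
              have hsub : A ∩ upFace (x + 1) y ⊆ {dE (x + 1) y} := by
                rintro e ⟨heA, hef⟩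
                rw [upFace_eq] at hef
                rcases hef with rfl | rfl | rfl
                · exact absurd heA (ihH (x + 1))
                · exact absurd heA hv
                · rfl
              have hempty := eq_empty_of_even_subset_singleton hsub heven
              intro hmem
              have : dE (x + 1) y ∈ A ∩ upFace (x + 1) y :=
                ⟨hmem, by rw [upFace_eq]; right; right; rfl⟩
              rw [hempty] at this
              exact this
            · refine hne _ fun h => ?_
              rw [isEdge_dE] at h
              refine hface ⟨?_, h.1, h.2⟩
              simp only [isVertex_iff] at *; omega
          exact ⟨hv, hd⟩
      refine ⟨?_, ?_⟩
      · -- horizontals at level y+1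
        intro x
        by_cases hface : IsDownFace n x y
        · have heven := hdown x y hface
          have hsub : A ∩ downFace x y ⊆ {hE x (y + 1)} := by
            rintro e ⟨heA, hef⟩
            rw [downFace_eq] at hef
            rcases hef with rfl | rfl | rfl
            · exact absurd heA (row x).2
            · exact absurd heA (row (x + 1)).1
            · rfl
          have hempty := eq_empty_of_even_subset_singleton hsub heven
          intro hmem
          have : hE x (y + 1) ∈ A ∩ downFace x y :=
            ⟨hmem, by rw [downFace_eq]; right; right; rfl⟩
          rw [hempty] at this
          exact this
        · refine hne _ fun h => ?_
          rw [isEdge_hE] at h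
          refine hface ⟨?_, h.1, h.2⟩
          simp only [isVertex_iff] at *; omega
      · intro y' x hy'
        by_cases h : y' < y
        · exact ihL y' x h
        · have : y' = y := by omega
          subst this
          exact row x
  ext e
  simp only [Set.mem_empty_iff_false, iff_false]
  intro hmem
  obtain ⟨x, y, hc⟩ := edge_form (hedge e hmem)
  rcases hc with ⟨rfl, hv1, hv2⟩ | ⟨rfl, hv1, hv2⟩ | ⟨rfl, hv1, hv2⟩
  · exact (key y hv1.1).1 x hmem
  · exact ((key (y + 1) (by omega)).2 y x (by omega)).1 hmem
  · exact ((key (y + 1) (by omega)).2 y x (by omega)).2 hmem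
lemma totallyEven_map {n : ℕ} {A : Set TEdge} (hA : TotallyEven n A)
    (g : Pt → Pt) (hg : Function.Involutive g)
    (hedge : ∀ e, IsEdge n e → IsEdge n (Sym2.map g e))
    (hvertex : ∀ p, IsVertex n p → IsVertex n (g p))
    (hupf : ∀ x y, IsUpFace n x y →
      ∃ a b, IsUpFace n a b ∧ Sym2.map g '' upFace a b = upFace x y)
    (hdownf : ∀ x y, IsDownFace n x y →
      ∃ a b, IsDownFace n a b ∧ Sym2.map g '' downFace a b = downFace x y) :
    TotallyEven n (Sym2.map g '' A) := by
  have hGi : Function.Involutive (Sym2.map g) := by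
    intro e
    rw [Sym2.map_map]
    have : g ∘ g = id := funext hg
    rw [this, Sym2.map_id, id_eq]
  have hmemG : ∀ (S : Set TEdge) (e : TEdge), e ∈ Sym2.map g '' S ↔ Sym2.map g e ∈ S := by
    intro S e
    constructor
    · rintro ⟨a, ha, rfl⟩; rwa [hGi a]
    · intro h; exact ⟨_, h, hGi e⟩
  obtain ⟨h1, h2, h3, h4⟩ := hA
  refine ⟨?_, ?_, ?_, ?_⟩
  · rintro e ⟨a, ha, rfl⟩; exact hedge a (h1 a ha)
  · intro p hp
    have hmem : ∀ e : TEdge, p ∈ e ↔ g p ∈ Sym2.map g e := by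
      intro e
      constructor
      · intro h; exact Sym2.mem_map.mpr ⟨p, h, rfl⟩
      · intro h
        obtain ⟨a, ha, hga⟩ := Sym2.mem_map.mp h
        rwa [← hg.injective hga]
    have hset : {e ∈ Sym2.map g '' A | p ∈ e} = Sym2.map g '' {e ∈ A | g p ∈ e} := by
      ext e
      rw [hmemG]
      simp only [Set.mem_setOf_eq]
      rw [hmemG, hmem e]
    rw [hset, Set.ncard_image_of_injective _ hGi.injective]
    exact h2 (g p) (hvertex p hp)
  · intro x y hf
    obtain ⟨a, b, hab, him⟩ := hupf x y hf
    have : Sym2.map g '' A ∩ upFace x y = Sym2.map g '' (A ∩ upFace a b) := by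
      rw [Set.image_inter hGi.injective, him]
    rw [this, Set.ncard_image_of_injective _ hGi.injective]
    exact h3 a b hab
  · intro x y hf
    obtain ⟨a, b, hab, him⟩ := hdownf x y hf
    have : Sym2.map g '' A ∩ downFace x y = Sym2.map g '' (A ∩ downFace a b) := by
      rw [Set.image_inter hGi.injective, him]
    rw [this, Set.ncard_image_of_injective _ hGi.injective]
    exact h4 a b hab
lemma sym2_map_involutive {g : Pt → Pt} (hg : Function.Involutive g) :
    Function.Involutive (Sym2.map g) := by
  intro e
  rw [Sym2.map_map]
  have : g ∘ g = id := funext hg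
  rw [this, Sym2.map_id, id_eq]

lemma mem_sym2_image {g : Pt → Pt} (hg : Function.Involutive g) (S : Set TEdge) (e : TEdge) :
    e ∈ Sym2.map g '' S ↔ Sym2.map g e ∈ S := by
  constructor
  · rintro ⟨a, ha, rfl⟩; rwa [sym2_map_involutive hg a]
  · intro h; exact ⟨_, h, sym2_map_involutive hg e⟩

/-! ### The swap symmetry -/

def sw : Pt → Pt := fun p => (p.2, p.1)

lemma sw_invol : Function.Involutive sw := fun _ => rfl

lemma sw_hE (x y : ℕ) : Sym2.map sw (hE x y) = vE y x := by
  simp [hE, vE, sw, Sym2.map_pair_eq]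

lemma sw_vE (x y : ℕ) : Sym2.map sw (vE x y) = hE y x := by
  simp [hE, vE, sw, Sym2.map_pair_eq]

lemma sw_dE (x y : ℕ) : Sym2.map sw (dE x y) = dE y x := by
  simp only [dE, sw, Sym2.map_pair_eq]
  exact Sym2.eq_swap

lemma sw_upFace (x y : ℕ) : Sym2.map sw '' upFace y x = upFace x y := by
  rw [upFace_eq, upFace_eq, Set.image_insert_eq, Set.image_insert_eq, Set.image_singleton,
    sw_hE, sw_vE, sw_dE]
  exact Set.insert_comm _ _ _

lemma sw_downFace (x y : ℕ) : Sym2.map sw '' downFace y x = downFace x y := by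
  rw [downFace_eq, downFace_eq, Set.image_insert_eq, Set.image_insert_eq, Set.image_singleton,
    sw_dE, sw_vE, sw_hE]
  congr 1
  exact Set.pair_comm _ _

lemma totallyEven_sw {n : ℕ} {A : Set TEdge} (hA : TotallyEven n A) :
    TotallyEven n (Sym2.map sw '' A) := by
  refine totallyEven_map hA sw sw_invol ?_ ?_ ?_ ?_
  · intro e he
    obtain ⟨x, y, hc⟩ := edge_form he
    rcases hc with ⟨rfl, hv1, hv2⟩ | ⟨rfl, hv1, hv2⟩ | ⟨rfl, hv1, hv2⟩
    · rw [sw_hE, isEdge_vE]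
      simp only [isVertex_iff] at *; omega
    · rw [sw_vE, isEdge_hE]
      simp only [isVertex_iff] at *; omega
    · rw [sw_dE, isEdge_dE]
      simp only [isVertex_iff] at *; omega
  · rintro ⟨x, y⟩ h
    simp only [sw, isVertex_iff] at *; omega
  · intro x y hf
    refine ⟨y, x, ?_, sw_upFace x y⟩
    obtain ⟨hv1, hv2, hv3⟩ := hf
    refine ⟨?_, ?_, ?_⟩ <;> · simp only [isVertex_iff] at *; omega
  · intro x y hf
    refine ⟨y, x, ?_, sw_downFace x y⟩
    obtain ⟨hv1, hv2, hv3⟩ := hf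
    refine ⟨?_, ?_, ?_⟩ <;> · simp only [isVertex_iff] at *; omega

lemma totallyEven_no_left {n : ℕ} {A : Set TEdge} (hA : TotallyEven n A)
    (hl : ∀ j, 1 ≤ j → j ≤ n → vE 1 j ∉ A) : A = ∅ := by
  have hB := totallyEven_sw hA
  have hnb : ∀ i, 1 ≤ i → i ≤ n → hE i 1 ∉ Sym2.map sw '' A := by
    intro i h1 h2 hmem
    rw [mem_sym2_image sw_invol, sw_hE] at hmem
    exact hl i h1 h2 hmem
  have := totallyEven_no_bottom hB hnb
  exact Set.image_eq_empty.mp this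
/-! ### The mirror symmetry -/

def mir (n : ℕ) : Pt → Pt :=
  fun p => if 1 ≤ p.1 ∧ p.1 + p.2 ≤ n + 2 then (n + 3 - p.1 - p.2, p.2) else p

lemma mir_eq {n x y : ℕ} (h1 : 1 ≤ x) (h2 : x + y ≤ n + 2) :
    mir n (x, y) = (n + 3 - x - y, y) := if_pos ⟨h1, h2⟩

lemma mir_invol (n : ℕ) : Function.Involutive (mir n) := by
  rintro ⟨x, y⟩
  by_cases h : 1 ≤ x ∧ x + y ≤ n + 2
  · rw [mir_eq h.1 h.2, mir_eq (x := n + 3 - x - y) (y := y) (by omega) (by omega)]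
    simp only [Prod.mk.injEq, and_true, true_and, and_self, eq_self_iff_true, or_true, true_or]
    omega
  · show mir n (mir n (x, y)) = (x, y)
    rw [show mir n (x, y) = (x, y) from if_neg h, show mir n (x, y) = (x, y) from if_neg h]

lemma mir_hE {n x y : ℕ} (hx : 1 ≤ x) (h : x + 1 + y ≤ n + 2) :
    Sym2.map (mir n) (hE x y) = hE (n + 2 - x - y) y := by
  rw [hE, hE, Sym2.map_pair_eq, mir_eq (x := x) (y := y) hx (by omega),
    mir_eq (x := x + 1) (y := y) (by omega) (by omega), Sym2.eq_iff]
  simp only [Prod.mk.injEq, and_true, true_and, and_self, eq_self_iff_true, or_true, true_or]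
  omega

lemma mir_vE {n x y : ℕ} (hx : 1 ≤ x) (h : x + y + 1 ≤ n + 2) :
    Sym2.map (mir n) (vE x y) = dE (n + 2 - x - y) y := by
  rw [vE, dE, Sym2.map_pair_eq, mir_eq (x := x) (y := y) hx (by omega),
    mir_eq (x := x) (y := y + 1) hx (by omega), Sym2.eq_iff]
  simp only [Prod.mk.injEq, and_true, true_and, and_self, eq_self_iff_true, or_true, true_or]
  omega

lemma mir_dE {n x y : ℕ} (hx : 1 ≤ x) (h : x + 1 + y ≤ n + 2) :
    Sym2.map (mir n) (dE x y) = vE (n + 2 - x - y) y := by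
  rw [dE, vE, Sym2.map_pair_eq, mir_eq (x := x + 1) (y := y) (by omega) (by omega),
    mir_eq (x := x) (y := y + 1) hx (by omega), Sym2.eq_iff]
  simp only [Prod.mk.injEq, and_true, true_and, and_self, eq_self_iff_true, or_true, true_or]
  omega

lemma mir_upFace {n x y : ℕ} (hx : 1 ≤ x) (h2 : x + 1 + y ≤ n + 2) :
    Sym2.map (mir n) '' upFace (n + 2 - x - y) y = upFace x y := by
  have r1 := mir_hE (n := n) (x := n + 2 - x - y) (y := y) (by omega) (by omega)
  have r2 := mir_vE (n := n) (x := n + 2 - x - y) (y := y) (by omega) (by omega)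
  have r3 := mir_dE (n := n) (x := n + 2 - x - y) (y := y) (by omega) (by omega)
  rw [upFace_eq, upFace_eq, Set.image_insert_eq, Set.image_insert_eq, Set.image_singleton,
    r1, r2, r3, show n + 2 - (n + 2 - x - y) - y = x by omega]
  congr 1
  exact Set.pair_comm _ _

lemma mir_downFace {n x y : ℕ} (hx : 1 ≤ x) (h2 : x + y ≤ n) :
    Sym2.map (mir n) '' downFace (n + 1 - x - y) y = downFace x y := by
  have r1 := mir_dE (n := n) (x := n + 1 - x - y) (y := y) (by omega) (by omega)
  have r2 := mir_vE (n := n) (x := n + 1 - x - y + 1) (y := y) (by omega) (by omega)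
  have r3 := mir_hE (n := n) (x := n + 1 - x - y) (y := y + 1) (by omega) (by omega)
  rw [downFace_eq, downFace_eq, Set.image_insert_eq, Set.image_insert_eq, Set.image_singleton,
    r1, r2, r3, show n + 2 - (n + 1 - x - y) - y = x + 1 by omega,
    show n + 2 - (n + 1 - x - y + 1) - y = x by omega,
    show n + 2 - (n + 1 - x - y) - (y + 1) = x by omega]
  exact Set.insert_comm _ _ _

lemma totallyEven_mir {n : ℕ} {A : Set TEdge} (hA : TotallyEven n A) :
    TotallyEven n (Sym2.map (mir n) '' A) := by
  refine totallyEven_map hA (mir n) (mir_invol n) ?_ ?_ ?_ ?_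
  · intro e he
    obtain ⟨x, y, hc⟩ := edge_form he
    rcases hc with ⟨rfl, hv1, hv2⟩ | ⟨rfl, hv1, hv2⟩ | ⟨rfl, hv1, hv2⟩ <;>
      simp only [isVertex_iff] at hv1 hv2
    · rw [mir_hE (by omega) (by omega), isEdge_hE]
      simp only [isVertex_iff]; omega
    · rw [mir_vE (by omega) (by omega), isEdge_dE]
      simp only [isVertex_iff]; omega
    · rw [mir_dE (by omega) (by omega), isEdge_vE]
      simp only [isVertex_iff]; omega
  · rintro ⟨x, y⟩ h
    simp only [isVertex_iff] at h
    rw [mir_eq (by omega) (by omega)]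
    simp only [isVertex_iff]; omega
  · intro x y hf
    obtain ⟨hv1, hv2, hv3⟩ := hf
    simp only [isVertex_iff] at hv1 hv2 hv3
    refine ⟨n + 2 - x - y, y, ?_, mir_upFace (by omega) (by omega)⟩
    refine ⟨?_, ?_, ?_⟩ <;> · simp only [isVertex_iff]; omega
  · intro x y hf
    obtain ⟨hv1, hv2, hv3⟩ := hf
    simp only [isVertex_iff] at hv1 hv2 hv3
    refine ⟨n + 1 - x - y, y, ?_, mir_downFace (by omega) (by omega)⟩
    refine ⟨?_, ?_, ?_⟩ <;> · simp only [isVertex_iff]; omega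

lemma totallyEven_no_right {n : ℕ} {A : Set TEdge} (hA : TotallyEven n A)
    (hr : ∀ j, 1 ≤ j → j ≤ n → s(((n + 2 - j : ℕ), (j : ℕ)), ((n + 1 - j : ℕ), (j + 1 : ℕ))) ∉ A) :
    A = ∅ := by
  have hB := totallyEven_mir hA
  have hnl : ∀ j, 1 ≤ j → j ≤ n → vE 1 j ∉ Sym2.map (mir n) '' A := by
    intro j h1 h2 hmem
    rw [mem_sym2_image (mir_invol n), mir_vE (by omega) (by omega)] at hmem
    have : dE (n + 2 - 1 - j) j = s(((n + 2 - j : ℕ), (j : ℕ)), ((n + 1 - j : ℕ), (j + 1 : ℕ))) := by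
      rw [dE, Sym2.eq_iff]
      simp only [Prod.mk.injEq, and_true, true_and, and_self, eq_self_iff_true, or_true, true_or]
      omega
    rw [this] at hmem
    exact hr j h1 h2 hmem
  have := totallyEven_no_left hB hnl
  exact Set.image_eq_empty.mp this
lemma face_finite (a b c : TEdge) : ({a, b, c} : Set TEdge).Finite :=
  (Set.finite_singleton c).insert b |>.insert a

lemma totallyEven_symmDiff {n : ℕ} {C₁ C₂ : Set TEdge} (h₁ : IsCycle n C₁) (h₂ : IsCycle n C₂)
    (hsig : SameSignature n C₁ C₂) : TotallyEven n (C₁ ∆ C₂) := by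
  refine ⟨?_, ?_, ?_, ?_⟩
  · intro e he
    rcases Set.mem_symmDiff.mp he with ⟨h, -⟩ | ⟨h, -⟩
    · exact cycle_edges h₁ e h
    · exact cycle_edges h₂ e h
  · intro p hp
    have hset : {e ∈ C₁ ∆ C₂ | p ∈ e} = {e ∈ C₁ | p ∈ e} ∆ {e ∈ C₂ | p ∈ e} := by
      ext e
      simp only [Set.mem_setOf_eq, Set.mem_symmDiff]
      tauto
    obtain ⟨hf1, he1⟩ := cycle_vertex h₁ p
    obtain ⟨hf2, he2⟩ := cycle_vertex h₂ p
    rw [hset]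
    exact even_ncard_symmDiff_of_even hf1 hf2 he1 he2
  · intro x y hf
    have hset : (C₁ ∆ C₂) ∩ upFace x y = (C₁ ∩ upFace x y) ∆ (C₂ ∩ upFace x y) := by
      ext e
      simp only [Set.mem_inter_iff, Set.mem_symmDiff]
      tauto
    rw [hset]
    exact even_ncard_symmDiff_of_eq ((face_finite _ _ _).subset Set.inter_subset_right)
      ((face_finite _ _ _).subset Set.inter_subset_right) (hsig.1 x y hf)
  · intro x y hf
    have hset : (C₁ ∆ C₂) ∩ downFace x y = (C₁ ∩ downFace x y) ∆ (C₂ ∩ downFace x y) := by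
      ext e
      simp only [Set.mem_inter_iff, Set.mem_symmDiff]
      tauto
    rw [hset]
    exact even_ncard_symmDiff_of_eq ((face_finite _ _ _).subset Set.inter_subset_right)
      ((face_finite _ _ _).subset Set.inter_subset_right) (hsig.2 x y hf)
/-- For cycles `C₁, C₂` in `Tₙ` with the same Slitherlink signature: if neither contains
an edge of the bottom side then `C₁ = C₂`; and if `C₁ ≠ C₂`, then on each of the three
sides (bottom, left, right) at least one of `C₁, C₂` contains an edge. -/
theorem distinct_cycles_touch_each_side (n : ℕ) (C₁ C₂ : Set TEdge)
    (h₁ : IsCycle n C₁) (h₂ : IsCycle n C₂) (hsig : SameSignature n C₁ C₂) :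
    ((∀ i : ℕ, 1 ≤ i → i ≤ n →
        s(((i : ℕ), 1), (i + 1, 1)) ∉ C₁ ∧ s(((i : ℕ), 1), (i + 1, 1)) ∉ C₂) → C₁ = C₂) ∧
    (C₁ ≠ C₂ →
      (∃ i : ℕ, 1 ≤ i ∧ i ≤ n ∧
        (s(((i : ℕ), 1), (i + 1, 1)) ∈ C₁ ∨ s(((i : ℕ), 1), (i + 1, 1)) ∈ C₂)) ∧
      (∃ j : ℕ, 1 ≤ j ∧ j ≤ n ∧
        (s((1, (j : ℕ)), (1, j + 1)) ∈ C₁ ∨ s((1, (j : ℕ)), (1, j + 1)) ∈ C₂)) ∧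
      (∃ j : ℕ, 1 ≤ j ∧ j ≤ n ∧
        (s((n + 2 - j, (j : ℕ)), (n + 1 - j, j + 1)) ∈ C₁ ∨
         s((n + 2 - j, (j : ℕ)), (n + 1 - j, j + 1)) ∈ C₂))) := by
  have hTE := totallyEven_symmDiff h₁ h₂ hsig
  have hconc : C₁ ∆ C₂ = ∅ → C₁ = C₂ := by
    intro h
    have : C₁ ∆ C₂ = ⊥ := h
    exact symmDiff_eq_bot.mp this
  constructor
  · intro hnb
    refine hconc (totallyEven_no_bottom hTE ?_)
    intro i hi1 hi2 hmem
    rcases Set.mem_symmDiff.mp hmem with ⟨h, -⟩ | ⟨h, -⟩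
    · exact (hnb i hi1 hi2).1 h
    · exact (hnb i hi1 hi2).2 h
  · intro hne
    refine ⟨?_, ?_, ?_⟩
    · by_contra hcon
      push_neg at hcon
      refine hne (hconc (totallyEven_no_bottom hTE ?_))
      intro i hi1 hi2 hmem
      rcases Set.mem_symmDiff.mp hmem with ⟨h, -⟩ | ⟨h, -⟩
      · exact (hcon i hi1 hi2).1 h
      · exact (hcon i hi1 hi2).2 h
    · by_contra hcon
      push_neg at hcon
      refine hne (hconc (totallyEven_no_left hTE ?_))
      intro j hj1 hj2 hmem
      rcases Set.mem_symmDiff.mp hmem with ⟨h, -⟩ | ⟨h, -⟩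
      · exact (hcon j hj1 hj2).1 h
      · exact (hcon j hj1 hj2).2 h
    · by_contra hcon
      push_neg at hcon
      refine hne (hconc (totallyEven_no_right hTE ?_))
      intro j hj1 hj2 hmem
      rcases Set.mem_symmDiff.mp hmem with ⟨h, -⟩ | ⟨h, -⟩
      · exact (hcon j hj1 hj2).1 h
      · exact (hcon j hj1 hj2).2 h
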